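/- Let i_X, i_Y ≥ 1 and i ≥ 0 be integers and let η_X, η_Y, ε > 0 be constants. Then there exist a constant η0 > 0 and an integer n0 such that for every 3-graph H of order n ≥ n0 and all distinct vertices x, y ∈ V: if there are at least ε·n^{4i+1} (X,Y)-bridges of length i, where X = Ñ_{i_X,η_X}(x) and Y = Ñ_{i_Y,η_Y}(y), then x and y are (i_X + i_Y + i, η0)-close to each other. -/

import Mathlib

open Finset

variable {V : Type*} [Fintype V] [DecidableEq V]

/-- `E` is the edge set of a 3-uniform hypergraph: every edge has 3 vertices. -/
def IsThreeGraph (E : Finset (Finset V)) : Prop :=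
  ∀ e ∈ E, e.card = 3

/-- The codegree of the pair `u, v`: the number of vertices `w` with `{u,v,w} ∈ E`. -/
def deg (E : Finset (Finset V)) (u v : V) : ℕ :=
  (Finset.univ.filter fun w => ({u, v, w} : Finset V) ∈ E).card

/-- The minimum codegree `δ₂(H)`: the minimum of `deg u v` over pairs of distinct vertices. -/
noncomputable def delta2 (E : Finset (Finset V)) : ℕ :=
  sInf {d | ∃ u v : V, u ≠ v ∧ d = deg E u v}

/-- A 4-element vertex set `U` spans a copy of `K₄⁻ = K₄³ - e`: at least 3 of the
four 3-element subsets of `U` are edges. -/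
def SpansK4m (E : Finset (Finset V)) (U : Finset V) : Prop :=
  U.card = 4 ∧ 3 ≤ ((U.powersetCard 3).filter (fun T => T ∈ E)).card

/-- A 4-element vertex set `U` spans a copy of `K₄³`: all four 3-element subsets are edges. -/
def SpansK4 (E : Finset (Finset V)) (U : Finset V) : Prop :=
  U.card = 4 ∧ ∀ T ∈ U.powersetCard 3, T ∈ E

/-- The induced subgraph `H[S]` has a `K₄⁻`-factor: `S` is partitioned into
4-element sets, each spanning a copy of `K₄⁻`. -/
def FactorOn (E : Finset (Finset V)) (S : Finset V) : Prop :=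
  ∃ P : Finset (Finset V),
    (∀ U ∈ P, U ⊆ S ∧ SpansK4m E U) ∧ ∀ v ∈ S, ∃! U, U ∈ P ∧ v ∈ U

/-- `H` has a `K₄⁻`-factor. -/
def HasK4mFactor (E : Finset (Finset V)) : Prop :=
  FactorOn E Finset.univ

/-- `L(T)`: the set of vertices `v ∉ T` such that `T ∪ {v}` spans a copy of `K₄⁻`. -/
def Lset (E : Finset (Finset V)) (T : Finset V) : Set V :=
  {v | v ∉ T ∧ SpansK4m E (insert v T)}

/-- `S` is an `(x,y)`-connector of length `i`: `S` is disjoint from `{x,y}`,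
`|S| = 4i - 1`, and both `H[S ∪ {x}]` and `H[S ∪ {y}]` have `K₄⁻`-factors. -/
def IsConnector (E : Finset (Finset V)) (i : ℕ) (x y : V) (S : Finset V) : Prop :=
  x ≠ y ∧ x ∉ S ∧ y ∉ S ∧ S.card = 4 * i - 1 ∧
    FactorOn E (insert x S) ∧ FactorOn E (insert y S)

/-- `x` and `y` are `(i,η)`-close: there are at least `η · n^(4i-1)`
`(x,y)`-connectors of length `i`, where `n` is the order of `H`. -/
def Close (E : Finset (Finset V)) (i : ℕ) (η : ℝ) (x y : V) : Prop :=
  η * (Fintype.card V : ℝ) ^ (4 * i - 1) ≤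
    (Set.ncard {S : Finset V | IsConnector E i x y S} : ℝ)

/-- `Ñ_{i,η}(x)`: the set of vertices `(i,η)`-close to `x`. -/
def tildeN (E : Finset (Finset V)) (i : ℕ) (η : ℝ) (x : V) : Set V :=
  {y | Close E i η x y}

/-- A vertex set `U` is `(i,η)`-closed in `H`: every two distinct vertices of `U`
are `(i,η)`-close. -/
def ClosedIn (E : Finset (Finset V)) (i : ℕ) (η : ℝ) (U : Set V) : Prop :=
  ∀ x ∈ U, ∀ y ∈ U, x ≠ y → Close E i η x y

/-- `H` is `(i,η)`-closed. -/
def K4Closed (E : Finset (Finset V)) (i : ℕ) (η : ℝ) : Prop :=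
  ClosedIn E i η Set.univ

/-- `(x, y, S)` is an `(X,Y)`-bridge of length `i`: `x ∈ X`, `y ∈ Y` and `S` is an
`(x,y)`-connector of length `i`; for `i = 0` the bridges are `(u, u, ∅)` with `u ∈ X ∩ Y`. -/
def IsBridge (E : Finset (Finset V)) (i : ℕ) (X Y : Set V) (t : V × V × Finset V) : Prop :=
  t.1 ∈ X ∧ t.2.1 ∈ Y ∧
    (if i = 0 then t.1 = t.2.1 ∧ t.2.2 = ∅ else IsConnector E i t.1 t.2.1 t.2.2)

/-- The number of `(X,Y)`-bridges of length `i`. -/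
noncomputable def numBridges (E : Finset (Finset V)) (i : ℕ) (X Y : Set V) : ℕ :=
  Set.ncard {t : V × V × Finset V | IsBridge E i X Y t}


set_option linter.unusedSectionVars false

lemma ncard_setOf_eq' {α : Type*} [Fintype α] (P : α → Prop) [DecidablePred P] :
    Set.ncard {a | P a} = (Finset.univ.filter P).card := by
  rw [← Set.ncard_coe_finset]
  congr 1
  ext a; simp

lemma factorOn_union {E : Finset (Finset V)} {A B : Finset V}
    (hA : FactorOn E A) (hB : FactorOn E B) (hAB : Disjoint A B) :
    FactorOn E (A ∪ B) := by
  obtain ⟨P, hP1, hP2⟩ := hA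
  obtain ⟨Q, hQ1, hQ2⟩ := hB
  refine ⟨P ∪ Q, ?_, ?_⟩
  · intro U hU
    rcases mem_union.1 hU with h | h
    · exact ⟨(hP1 U h).1.trans subset_union_left, (hP1 U h).2⟩
    · exact ⟨(hQ1 U h).1.trans subset_union_right, (hQ1 U h).2⟩
  · intro v hv
    rcases mem_union.1 hv with h | h
    · obtain ⟨U, ⟨hUP, hvU⟩, huniq⟩ := hP2 v h
      refine ⟨U, ⟨mem_union_left _ hUP, hvU⟩, ?_⟩
      rintro U' ⟨hU', hvU'⟩
      rcases mem_union.1 hU' with h' | h'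
      · exact huniq U' ⟨h', hvU'⟩
      · exact absurd ((hQ1 U' h').1 hvU') (fun hb => (disjoint_left.1 hAB h) hb)
    · obtain ⟨U, ⟨hUQ, hvU⟩, huniq⟩ := hQ2 v h
      refine ⟨U, ⟨mem_union_right _ hUQ, hvU⟩, ?_⟩
      rintro U' ⟨hU', hvU'⟩
      rcases mem_union.1 hU' with h' | h'
      · exact absurd ((hP1 U' h').1 hvU') (fun ha => (disjoint_right.1 hAB h) ha)
      · exact huniq U' ⟨h', hvU'⟩

lemma card_not_disjoint_le' {α : Type*} [Fintype α] [DecidableEq α] (m : ℕ)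
    (s : Finset (Finset α)) (hs : ∀ S ∈ s, S.card = m) (W : Finset α) :
    ((s.filter fun S => ¬ Disjoint S W).card : ℕ) ≤ W.card * (Fintype.card α) ^ (m - 1) := by
  classical
  have h : (s.filter fun S => ¬ Disjoint S W) ⊆
      W.biUnion (fun w => (Finset.univ.powersetCard m).filter (fun S => w ∈ S)) := by
    intro S hS
    simp only [mem_filter, Finset.not_disjoint_iff] at hS
    obtain ⟨hS1, w, hwS, hwW⟩ := hS
    exact mem_biUnion.2 ⟨w, hwW, mem_filter.2 ⟨mem_powersetCard_univ.2 (hs S hS1), hwS⟩⟩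
  refine (card_le_card h).trans ?_
  refine card_biUnion_le_card_mul _ _ _ ?_
  intro w _
  have h2 : ((Finset.univ.powersetCard m).filter (fun S => w ∈ S)).card ≤
      ((Finset.univ : Finset α).powersetCard (m - 1)).card := by
    apply card_le_card_of_injOn (fun S => S.erase w)
    · intro S hS
      simp only [mem_coe, mem_filter, mem_powersetCard_univ] at hS ⊢
      rw [card_erase_of_mem hS.2, hS.1]
    · intro S hS T hT h
      simp only [coe_filter, Set.mem_setOf_eq, mem_powersetCard_univ] at hS hT
      rw [← insert_erase hS.2, show S.erase w = T.erase w from h, insert_erase hT.2]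
  refine h2.trans ?_
  rw [card_powersetCard, card_univ]
  exact Nat.choose_le_pow _ _

set_option maxHeartbeats 1000000 in
lemma isConnector_glue {E : Finset (Finset V)} {iX iY i : ℕ}
    (hiX : 1 ≤ iX) (hiY : 1 ≤ iY) (hi : 1 ≤ i)
    {x y x' y' : V} {Sx S Sy : Finset V}
    (hX : IsConnector E iX x x' Sx) (hS : IsConnector E i x' y' S)
    (hY : IsConnector E iY y y' Sy)
    (hxy : x ≠ y) (hxS : x ∉ S) (hyS : y ∉ S) (hx'y : x' ≠ y) (hy'x : y' ≠ x)
    (hSxS : Disjoint Sx S) (hSxSy : Disjoint Sx Sy) (hSSy : Disjoint S Sy)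
    (hy'Sx : y' ∉ Sx) (hySx : y ∉ Sx) (hx'Sy : x' ∉ Sy) (hxSy : x ∉ Sy) :
    IsConnector E (iX + iY + i) x y (Sx ∪ insert x' S ∪ insert y' Sy) := by
  obtain ⟨hxx', hxSx, hx'Sx, hcX, hFxSx, hFx'Sx⟩ := hX
  obtain ⟨hx'y', hx'S, hy'S, hcS, hFx'S, hFy'S⟩ := hS
  obtain ⟨hyy', hySy, hy'Sy, hcY, hFySy, hFy'Sy⟩ := hY
  have hd1 : Disjoint Sx (insert x' S) := by
    rw [Finset.disjoint_insert_right]; exact ⟨hx'Sx, hSxS⟩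
  have hd2 : Disjoint Sx (insert y' Sy) := by
    rw [Finset.disjoint_insert_right]; exact ⟨hy'Sx, hSxSy⟩
  have hd3 : Disjoint (insert x' S) (insert y' Sy) := by
    rw [Finset.disjoint_insert_left, Finset.disjoint_insert_right]
    exact ⟨by simp [hx'y', hx'Sy], hy'S, hSSy⟩
  refine ⟨hxy, ?_, ?_, ?_, ?_, ?_⟩
  · simp only [mem_union, mem_insert, not_or]
    exact ⟨⟨hxSx, hxx', hxS⟩, hy'x.symm, hxSy⟩
  · simp only [mem_union, mem_insert, not_or]
    exact ⟨⟨hySx, hx'y.symm, hyS⟩, hyy', hySy⟩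
  · rw [card_union_of_disjoint (Finset.disjoint_union_left.2 ⟨hd2, hd3⟩),
      card_union_of_disjoint hd1, card_insert_of_notMem hx'S,
      card_insert_of_notMem hy'Sy, hcX, hcS, hcY]
    omega
  · have e1 : insert x (Sx ∪ insert x' S ∪ insert y' Sy)
        = (insert x Sx) ∪ ((insert x' S) ∪ (insert y' Sy)) := by
      ext a; simp only [mem_union, mem_insert]; tauto
    rw [e1]
    refine factorOn_union hFxSx (factorOn_union hFx'S hFy'Sy hd3) ?_
    rw [Finset.disjoint_union_right, Finset.disjoint_insert_left,
      Finset.disjoint_insert_left]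
    exact ⟨⟨by simp [hxx', hxS], hd1⟩, by simp [hy'x.symm, hxSy], hd2⟩
  · have e2 : insert y (Sx ∪ insert x' S ∪ insert y' Sy)
        = (insert x' Sx) ∪ ((insert y' S) ∪ (insert y Sy)) := by
      ext a; simp only [mem_union, mem_insert]; tauto
    rw [e2]
    have hdS : Disjoint (insert y' S) (insert y Sy) := by
      rw [Finset.disjoint_insert_left, Finset.disjoint_insert_right]
      exact ⟨by simp [hyy'.symm, hy'Sy], hyS, hSSy⟩
    refine factorOn_union hFx'Sx (factorOn_union hFy'S hFySy hdS) ?_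
    rw [Finset.disjoint_union_right, Finset.disjoint_insert_left,
      Finset.disjoint_insert_left]
    refine ⟨⟨by simp [hx'y', hx'S], ?_⟩, by simp [hx'y, hx'Sy], ?_⟩
    · rw [Finset.disjoint_insert_right]; exact ⟨hy'Sx, hSxS⟩
    · rw [Finset.disjoint_insert_right]; exact ⟨hySx, hSxSy⟩

set_option maxHeartbeats 1000000 in
lemma isConnector_glue0 {E : Finset (Finset V)} {iX iY : ℕ}
    (hiX : 1 ≤ iX) (hiY : 1 ≤ iY)
    {x y u : V} {Sx Sy : Finset V}
    (hX : IsConnector E iX x u Sx) (hY : IsConnector E iY y u Sy)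
    (hxy : x ≠ y) (hSxSy : Disjoint Sx Sy) (hySx : y ∉ Sx) (hxSy : x ∉ Sy) :
    IsConnector E (iX + iY) x y (Sx ∪ insert u Sy) := by
  obtain ⟨hxu, hxSx, huSx, hcX, hFxSx, hFuSx⟩ := hX
  obtain ⟨hyu, hySy, huSy, hcY, hFySy, hFuSy⟩ := hY
  have hd : Disjoint Sx (insert u Sy) := by
    rw [Finset.disjoint_insert_right]; exact ⟨huSx, hSxSy⟩
  refine ⟨hxy, ?_, ?_, ?_, ?_, ?_⟩
  · simp only [mem_union, mem_insert, not_or]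
    exact ⟨hxSx, hxu, hxSy⟩
  · simp only [mem_union, mem_insert, not_or]
    exact ⟨hySx, hyu, hySy⟩
  · rw [card_union_of_disjoint hd, card_insert_of_notMem huSy, hcX, hcY]
    omega
  · have e1 : insert x (Sx ∪ insert u Sy) = (insert x Sx) ∪ (insert u Sy) := by
      ext a; simp only [mem_union, mem_insert]; tauto
    rw [e1]
    refine factorOn_union hFxSx hFuSy ?_
    rw [Finset.disjoint_insert_left]
    exact ⟨by simp [hxu, hxSy], hd⟩
  · have e2 : insert y (Sx ∪ insert u Sy) = (insert u Sx) ∪ (insert y Sy) := by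
      ext a; simp only [mem_union, mem_insert]; tauto
    rw [e2]
    refine factorOn_union hFuSx hFySy ?_
    rw [Finset.disjoint_insert_left, Finset.disjoint_insert_right]
    exact ⟨by simp [hyu.symm, huSy], hySx, hSxSy⟩


set_option maxHeartbeats 4000000 in
/-- if there are at least `ε·n^(4i+1)` `(Ñ_{i_X,η_X}(x), Ñ_{i_Y,η_Y}(y))`-bridges
of length `i`, then `x` and `y` are `(i_X + i_Y + i, η₀)`-close. -/
theorem stmt_6 :
    ∀ iX iY i : ℕ, 1 ≤ iX → 1 ≤ iY →
      ∀ ηX ηY ε : ℝ, 0 < ηX → 0 < ηY → 0 < ε →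
        ∃ η0 : ℝ, 0 < η0 ∧ ∃ n0 : ℕ, ∀ n : ℕ, n0 ≤ n →
          ∀ E : Finset (Finset (Fin n)), IsThreeGraph E →
            ∀ x y : Fin n, x ≠ y →
              ε * (n : ℝ) ^ (4 * i + 1) ≤
                ((numBridges E i (tildeN E iX ηX x) (tildeN E iY ηY y)) : ℝ) →
              Close E (iX + iY + i) η0 x y := by
  intro iX iY i hiX hiY ηX ηY ε hηX hηY hε
  classical
  set k := iX + iY + i with hk
  set C : ℕ := 4 * k * (4 * k * (2 ^ (4 * k) * (2 ^ (4 * k) * 2 ^ (4 * k)))) with hCdef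
  have hCpos : (0 : ℝ) < (C : ℝ) := by
    have : 0 < C := by positivity
    exact_mod_cast this
  refine ⟨ε * ηX * ηY / (8 * C), by positivity,
    ⌈8 / ε + (8 * i + 4) / ηY + (8 * i + 8 * iY + 2) / ηX⌉₊ + 1, ?_⟩
  intro n hn E hE x y hxy hB
  set N : ℝ := (n : ℝ) with hNdef
  have hn1 : 1 ≤ n := le_trans (Nat.le_add_left 1 _) hn
  have hN1 : (1 : ℝ) ≤ N := by rw [hNdef]; exact_mod_cast hn1
  have hN0 : (0 : ℝ) < N := lt_of_lt_of_le zero_lt_one hN1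
  have hNsum : 8 / ε + (8 * i + 4) / ηY + (8 * i + 8 * iY + 2) / ηX ≤ N := by
    refine le_trans (Nat.le_ceil _) ?_
    have : (⌈8 / ε + (8 * i + 4) / ηY + (8 * i + 8 * iY + 2) / ηX⌉₊ : ℝ) ≤ (n : ℝ) := by
      exact_mod_cast le_trans (Nat.le_add_right _ 1) hn
    exact this
  have hterm1 : (0:ℝ) ≤ 8 / ε := by positivity
  have hterm2 : (0:ℝ) ≤ (8 * i + 4) / ηY := by positivity
  have hterm3 : (0:ℝ) ≤ (8 * i + 8 * iY + 2) / ηX := by positivity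
  have hNe : 8 / ε ≤ N := by linarith
  have hNy : (8 * (i:ℝ) + 4) / ηY ≤ N := by linarith
  have hNx : (8 * (i:ℝ) + 8 * iY + 2) / ηX ≤ N := by linarith
  set B : Finset (Fin n × Fin n × Finset (Fin n)) :=
    Finset.univ.filter (fun t => IsBridge E i (tildeN E iX ηX x) (tildeN E iY ηY y) t) with hBdef
  have hBcard : ε * N ^ (4 * i + 1) ≤ (B.card : ℝ) := by
    unfold numBridges at hB
    rwa [ncard_setOf_eq'] at hB
  set GB : Finset (Fin n × Fin n × Finset (Fin n)) :=
    B.filter (fun t => t.1 ≠ y ∧ t.2.1 ≠ x ∧ x ∉ t.2.2 ∧ y ∉ t.2.2) with hGBdef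
  have hGBsub : GB ⊆ B := filter_subset _ _
  -- basic properties of bridges
  have hBprop : ∀ t ∈ B, Close E iX ηX x t.1 ∧ Close E iY ηY y t.2.1 ∧
      ((i = 0 ∧ t.1 = t.2.1 ∧ t.2.2 = ∅) ∨ (1 ≤ i ∧ IsConnector E i t.1 t.2.1 t.2.2)) := by
    intro t ht
    rw [hBdef, mem_filter] at ht
    obtain ⟨-, h1, h2, h3⟩ := ht
    refine ⟨h1, h2, ?_⟩
    by_cases hi0 : i = 0
    · rw [if_pos hi0] at h3; exact Or.inl ⟨hi0, h3⟩
    · rw [if_neg hi0] at h3; exact Or.inr ⟨Nat.one_le_iff_ne_zero.2 hi0, h3⟩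
  have hScard : ∀ t ∈ B, t.2.2.card ≤ 4 * i := by
    intro t ht
    rcases (hBprop t ht).2.2 with ⟨-, -, h⟩ | ⟨-, h⟩
    · simp [h]
    · rw [h.2.2.2.1]; omega
  -- bound on bad bridges
  have hbad : ((B \ GB).card : ℝ) ≤ 4 * N ^ (4 * i) := by
    rcases Nat.eq_zero_or_pos i with hi0 | hipos
    · -- i = 0 : bad bridges are among (y,y,∅) and (x,x,∅)
      have hsub : B \ GB ⊆ {(y, y, (∅ : Finset (Fin n))), (x, x, (∅ : Finset (Fin n)))} := by
        intro t ht
        rw [mem_sdiff] at ht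
        obtain ⟨htB, htn⟩ := ht
        have hng : ¬ (t.1 ≠ y ∧ t.2.1 ≠ x ∧ x ∉ t.2.2 ∧ y ∉ t.2.2) := by
          intro hgood
          exact htn (by rw [hGBdef, mem_filter]; exact ⟨htB, hgood⟩)
        rcases (hBprop t htB).2.2 with ⟨-, heq, hemp⟩ | ⟨h1, -⟩
        · rcases t with ⟨a, b, c⟩
          simp only at heq hemp hng
          subst heq; subst hemp
          simp only [Finset.notMem_empty, not_false_iff, and_true] at hng
          simp only [mem_insert, mem_singleton, Prod.mk.injEq]
          by_cases ha : a = y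
          · left; exact ⟨ha, ha, trivial⟩
          · by_cases hb : a = x
            · right; exact ⟨hb, hb, trivial⟩
            · exact absurd ⟨ha, hb⟩ hng
        · omega
      have h2 : ((B \ GB).card : ℝ) ≤ 2 := by
        have hc : (B \ GB).card ≤ 2 :=
          (card_le_card hsub).trans ((card_insert_le _ _).trans (by simp))
        exact_mod_cast hc
      have h3 : (1:ℝ) ≤ N ^ (4 * i) := one_le_pow₀ hN1
      linarith
    · -- i ≥ 1
      have key1 : ∀ v : Fin n, ((B.filter (fun t => t.1 = v)).card) ≤ n ^ (4 * i) := by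
        intro v
        have h1 : (B.filter (fun t => t.1 = v)).card ≤
            ((Finset.univ : Finset (Fin n)) ×ˢ
              (Finset.univ : Finset (Fin n)).powersetCard (4 * i - 1)).card := by
          apply card_le_card_of_injOn (fun t => (t.2.1, t.2.2))
          · intro t ht
            simp only [mem_coe, mem_filter] at ht ⊢
            rcases (hBprop t ht.1).2.2 with ⟨h0, -⟩ | ⟨-, hc⟩
            · omega
            · rw [mem_product]
              exact ⟨mem_univ _, mem_powersetCard_univ.2 hc.2.2.2.1⟩
          · rintro ⟨a1, b1, c1⟩ h1 ⟨a2, b2, c2⟩ h2 h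
            simp only [mem_coe, mem_filter] at h1 h2
            simp only [Prod.mk.injEq] at h ⊢
            exact ⟨h1.2.trans h2.2.symm, h.1, h.2⟩
        refine h1.trans ?_
        rw [card_product, card_univ, Fintype.card_fin, card_powersetCard, card_univ,
          Fintype.card_fin]
        calc n * (n.choose (4 * i - 1)) ≤ n * n ^ (4 * i - 1) :=
              Nat.mul_le_mul_left _ (Nat.choose_le_pow _ _)
          _ = n ^ (4 * i - 1 + 1) := (pow_succ' n _).symm
          _ = n ^ (4 * i) := by congr 1; omega
      have key2 : ∀ v : Fin n, ((B.filter (fun t => t.2.1 = v)).card) ≤ n ^ (4 * i) := by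
        intro v
        have h1 : (B.filter (fun t => t.2.1 = v)).card ≤
            ((Finset.univ : Finset (Fin n)) ×ˢ
              (Finset.univ : Finset (Fin n)).powersetCard (4 * i - 1)).card := by
          apply card_le_card_of_injOn (fun t => (t.1, t.2.2))
          · intro t ht
            simp only [mem_coe, mem_filter] at ht ⊢
            rcases (hBprop t ht.1).2.2 with ⟨h0, -⟩ | ⟨-, hc⟩
            · omega
            · rw [mem_product]
              exact ⟨mem_univ _, mem_powersetCard_univ.2 hc.2.2.2.1⟩
          · rintro ⟨a1, b1, c1⟩ h1 ⟨a2, b2, c2⟩ h2 h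
            simp only [mem_coe, mem_filter] at h1 h2
            simp only [Prod.mk.injEq] at h ⊢
            exact ⟨h.1, h1.2.trans h2.2.symm, h.2⟩
        refine h1.trans ?_
        rw [card_product, card_univ, Fintype.card_fin, card_powersetCard, card_univ,
          Fintype.card_fin]
        calc n * (n.choose (4 * i - 1)) ≤ n * n ^ (4 * i - 1) :=
              Nat.mul_le_mul_left _ (Nat.choose_le_pow _ _)
          _ = n ^ (4 * i - 1 + 1) := (pow_succ' n _).symm
          _ = n ^ (4 * i) := by congr 1; omega
      have key3 : ∀ v : Fin n, ((B.filter (fun t => v ∈ t.2.2)).card) ≤ n ^ (4 * i) := by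
        intro v
        have h1 : (B.filter (fun t => v ∈ t.2.2)).card ≤
            ((Finset.univ : Finset (Fin n)) ×ˢ ((Finset.univ : Finset (Fin n)) ×ˢ
              (Finset.univ : Finset (Fin n)).powersetCard (4 * i - 2))).card := by
          apply card_le_card_of_injOn (fun t => (t.1, t.2.1, t.2.2.erase v))
          · intro t ht
            simp only [mem_coe, mem_filter] at ht ⊢
            rcases (hBprop t ht.1).2.2 with ⟨h0, -⟩ | ⟨-, hc⟩
            · omega
            · rw [mem_product, mem_product]
              refine ⟨mem_univ _, mem_univ _, mem_powersetCard_univ.2 ?_⟩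
              rw [card_erase_of_mem ht.2, hc.2.2.2.1]
              omega
          · rintro ⟨a1, b1, c1⟩ h1 ⟨a2, b2, c2⟩ h2 h
            simp only [mem_coe, mem_filter] at h1 h2
            simp only [Prod.mk.injEq] at h ⊢
            refine ⟨h.1, h.2.1, ?_⟩
            rw [← insert_erase h1.2, h.2.2, insert_erase h2.2]
        refine h1.trans ?_
        rw [card_product, card_product, card_univ, Fintype.card_fin, card_powersetCard,
          card_univ, Fintype.card_fin]
        calc n * (n * n.choose (4 * i - 2)) ≤ n * (n * n ^ (4 * i - 2)) :=
              Nat.mul_le_mul_left _ (Nat.mul_le_mul_left _ (Nat.choose_le_pow _ _))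
          _ = n ^ (4 * i - 2 + 1 + 1) := by rw [pow_succ' n (4 * i - 2 + 1), pow_succ' n (4 * i - 2)]
          _ = n ^ (4 * i) := by congr 1; omega
      have hsub : B \ GB ⊆ (B.filter (fun t => t.1 = y)) ∪ (B.filter (fun t => t.2.1 = x))
          ∪ (B.filter (fun t => x ∈ t.2.2)) ∪ (B.filter (fun t => y ∈ t.2.2)) := by
        intro t ht
        rw [mem_sdiff] at ht
        obtain ⟨htB, htn⟩ := ht
        have hng : ¬ (t.1 ≠ y ∧ t.2.1 ≠ x ∧ x ∉ t.2.2 ∧ y ∉ t.2.2) := by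
          intro hgood
          exact htn (by rw [hGBdef, mem_filter]; exact ⟨htB, hgood⟩)
        simp only [mem_union, mem_filter]
        push_neg at hng
        by_cases ha : t.1 = y
        · exact Or.inl (Or.inl (Or.inl ⟨htB, ha⟩))
        · by_cases hb : t.2.1 = x
          · exact Or.inl (Or.inl (Or.inr ⟨htB, hb⟩))
          · by_cases hc : x ∈ t.2.2
            · exact Or.inl (Or.inr ⟨htB, hc⟩)
            · exact Or.inr ⟨htB, hng ha hb hc⟩
      have hnat : (B \ GB).card ≤ 4 * n ^ (4 * i) := by
        refine (card_le_card hsub).trans ?_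
        calc ((B.filter (fun t => t.1 = y)) ∪ (B.filter (fun t => t.2.1 = x))
              ∪ (B.filter (fun t => x ∈ t.2.2)) ∪ (B.filter (fun t => y ∈ t.2.2))).card
            ≤ ((B.filter (fun t => t.1 = y)) ∪ (B.filter (fun t => t.2.1 = x))
              ∪ (B.filter (fun t => x ∈ t.2.2))).card
              + (B.filter (fun t => y ∈ t.2.2)).card := card_union_le _ _
          _ ≤ ((B.filter (fun t => t.1 = y)) ∪ (B.filter (fun t => t.2.1 = x))).card
              + (B.filter (fun t => x ∈ t.2.2)).card
              + (B.filter (fun t => y ∈ t.2.2)).card := by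
              have := card_union_le ((B.filter (fun t => t.1 = y))
                ∪ (B.filter (fun t => t.2.1 = x))) (B.filter (fun t => x ∈ t.2.2))
              omega
          _ ≤ (B.filter (fun t => t.1 = y)).card + (B.filter (fun t => t.2.1 = x)).card
              + (B.filter (fun t => x ∈ t.2.2)).card
              + (B.filter (fun t => y ∈ t.2.2)).card := by
              have := card_union_le (B.filter (fun t => t.1 = y)) (B.filter (fun t => t.2.1 = x))
              omega
          _ ≤ 4 * n ^ (4 * i) := by
              have := key1 y; have := key2 x; have := key3 x; have := key3 y
              omega
      calc ((B \ GB).card : ℝ) ≤ ((4 * n ^ (4 * i) : ℕ) : ℝ) := by exact_mod_cast hnat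
        _ = 4 * N ^ (4 * i) := by push_cast [hNdef]; ring
  have hGBcard : ε / 2 * N ^ (4 * i + 1) ≤ (GB.card : ℝ) := by
    have h1 : (B \ GB).card + GB.card = B.card := card_sdiff_add_card_eq_card hGBsub
    have h2 : (GB.card : ℝ) = (B.card : ℝ) - ((B \ GB).card : ℝ) := by
      have := congrArg (Nat.cast (R := ℝ)) h1
      push_cast at this
      linarith
    have h3 : 4 * N ^ (4 * i) ≤ ε / 2 * N ^ (4 * i + 1) := by
      have h4 : 8 ≤ ε * N := by
        rw [div_le_iff₀ hε] at hNe
        linarith [hNe]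
      have h5 : N ^ (4 * i + 1) = N ^ (4 * i) * N := pow_succ N (4 * i)
      have h6 : (0:ℝ) < N ^ (4 * i) := by positivity
      rw [h5]
      calc 4 * N ^ (4 * i) = N ^ (4 * i) * 4 := by ring
        _ ≤ N ^ (4 * i) * (ε / 2 * N) := by
            apply mul_le_mul_of_nonneg_left _ (le_of_lt h6)
            linarith
        _ = ε / 2 * (N ^ (4 * i) * N) := by ring
    linarith
  -- good connector collections
  set GoodY : Fin n × Fin n × Finset (Fin n) → Finset (Finset (Fin n)) := fun t =>
    (Finset.univ.filter (fun S => IsConnector E iY y t.2.1 S)).filter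
      (fun Sy => Disjoint Sy (insert x (insert t.1 t.2.2))) with hGoodYdef
  set GoodX : Fin n × Fin n × Finset (Fin n) → Finset (Fin n) → Finset (Finset (Fin n)) :=
    fun t Sy =>
    (Finset.univ.filter (fun S => IsConnector E iX x t.1 S)).filter
      (fun Sx => Disjoint Sx (insert y (insert t.2.1 (t.2.2 ∪ Sy)))) with hGoodXdef
  have hYb : ∀ t ∈ GB, ηY / 2 * N ^ (4 * iY - 1) ≤ ((GoodY t).card : ℝ) := by
    intro t ht
    have htB := hGBsub ht
    have hclose := (hBprop t htB).2.1
    unfold Close at hclose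
    rw [ncard_setOf_eq', Fintype.card_fin] at hclose
    have hsplit := Finset.card_filter_add_card_filter_not
      (s := Finset.univ.filter (fun S => IsConnector E iY y t.2.1 S))
      (p := fun Sy => Disjoint Sy (insert x (insert t.1 t.2.2)))
    have hbadcount : ((Finset.univ.filter (fun S => IsConnector E iY y t.2.1 S)).filter
        (fun Sy => ¬ Disjoint Sy (insert x (insert t.1 t.2.2)))).card
        ≤ (4 * i + 2) * n ^ (4 * iY - 1 - 1) := by
      refine le_trans (card_not_disjoint_le' (4 * iY - 1) _ ?_ _) ?_
      · intro S hS
        exact (mem_filter.1 hS).2.2.2.2.1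
      · rw [Fintype.card_fin]
        refine Nat.mul_le_mul_right _ ?_
        have h1 := card_insert_le x (insert t.1 t.2.2)
        have h2 := card_insert_le t.1 t.2.2
        have h3 := hScard t htB
        omega
    have hbadR : (((Finset.univ.filter (fun S => IsConnector E iY y t.2.1 S)).filter
        (fun Sy => ¬ Disjoint Sy (insert x (insert t.1 t.2.2)))).card : ℝ)
        ≤ (4 * (i:ℝ) + 2) * N ^ (4 * iY - 1 - 1) := by
      calc (((Finset.univ.filter (fun S => IsConnector E iY y t.2.1 S)).filter
          (fun Sy => ¬ Disjoint Sy (insert x (insert t.1 t.2.2)))).card : ℝ)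
          ≤ (((4 * i + 2) * n ^ (4 * iY - 1 - 1) : ℕ) : ℝ) := by exact_mod_cast hbadcount
        _ = (4 * (i:ℝ) + 2) * N ^ (4 * iY - 1 - 1) := by push_cast [hNdef]; ring
    have hcast : (4 * (i:ℝ) + 2) * N ^ (4 * iY - 1 - 1) ≤ ηY / 2 * N ^ (4 * iY - 1) := by
      have hpow : N ^ (4 * iY - 1) = N ^ (4 * iY - 1 - 1) * N := by
        rw [← pow_succ]; congr 1; omega
      have h84 : 8 * (i:ℝ) + 4 ≤ ηY * N := by
        rw [div_le_iff₀ hηY] at hNy; linarith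
      have hpw : (0:ℝ) ≤ N ^ (4 * iY - 1 - 1) := by positivity
      rw [hpow]
      have hle : (4 * (i:ℝ) + 2) ≤ ηY / 2 * N := by linarith
      calc (4 * (i:ℝ) + 2) * N ^ (4 * iY - 1 - 1)
          ≤ (ηY / 2 * N) * N ^ (4 * iY - 1 - 1) := mul_le_mul_of_nonneg_right hle hpw
        _ = ηY / 2 * (N ^ (4 * iY - 1 - 1) * N) := by ring
    have hsplitR := congrArg (fun m : ℕ => (m : ℝ)) hsplit
    push_cast at hsplitR
    simp only [hGoodYdef]
    linarith [hclose, hbadR, hcast, hsplitR]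
  have hXb : ∀ t ∈ GB, ∀ Sy ∈ GoodY t, ηX / 2 * N ^ (4 * iX - 1) ≤ ((GoodX t Sy).card : ℝ) := by
    intro t ht Sy hSy
    have htB := hGBsub ht
    have hclose := (hBprop t htB).1
    unfold Close at hclose
    rw [ncard_setOf_eq', Fintype.card_fin] at hclose
    have hSycard : Sy.card = 4 * iY - 1 := by
      simp only [hGoodYdef, mem_filter] at hSy
      exact hSy.1.2.2.2.2.1
    have hsplit := Finset.card_filter_add_card_filter_not
      (s := Finset.univ.filter (fun S => IsConnector E iX x t.1 S))
      (p := fun Sx => Disjoint Sx (insert y (insert t.2.1 (t.2.2 ∪ Sy))))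
    have hbadcount : ((Finset.univ.filter (fun S => IsConnector E iX x t.1 S)).filter
        (fun Sx => ¬ Disjoint Sx (insert y (insert t.2.1 (t.2.2 ∪ Sy))))).card
        ≤ (4 * i + 4 * iY + 1) * n ^ (4 * iX - 1 - 1) := by
      refine le_trans (card_not_disjoint_le' (4 * iX - 1) _ ?_ _) ?_
      · intro S hS
        exact (mem_filter.1 hS).2.2.2.2.1
      · rw [Fintype.card_fin]
        refine Nat.mul_le_mul_right _ ?_
        have h1 := card_insert_le y (insert t.2.1 (t.2.2 ∪ Sy))
        have h2 := card_insert_le t.2.1 (t.2.2 ∪ Sy)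
        have h3 := card_union_le t.2.2 Sy
        have h4 := hScard t htB
        omega
    have hbadR : (((Finset.univ.filter (fun S => IsConnector E iX x t.1 S)).filter
        (fun Sx => ¬ Disjoint Sx (insert y (insert t.2.1 (t.2.2 ∪ Sy))))).card : ℝ)
        ≤ (4 * (i:ℝ) + 4 * iY + 1) * N ^ (4 * iX - 1 - 1) := by
      calc (((Finset.univ.filter (fun S => IsConnector E iX x t.1 S)).filter
          (fun Sx => ¬ Disjoint Sx (insert y (insert t.2.1 (t.2.2 ∪ Sy))))).card : ℝ)
          ≤ (((4 * i + 4 * iY + 1) * n ^ (4 * iX - 1 - 1) : ℕ) : ℝ) := by exact_mod_cast hbadcount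
        _ = (4 * (i:ℝ) + 4 * iY + 1) * N ^ (4 * iX - 1 - 1) := by push_cast [hNdef]; ring
    have hcast : (4 * (i:ℝ) + 4 * iY + 1) * N ^ (4 * iX - 1 - 1)
        ≤ ηX / 2 * N ^ (4 * iX - 1) := by
      have hpow : N ^ (4 * iX - 1) = N ^ (4 * iX - 1 - 1) * N := by
        rw [← pow_succ]; congr 1; omega
      have h84 : 8 * (i:ℝ) + 8 * iY + 2 ≤ ηX * N := by
        rw [div_le_iff₀ hηX] at hNx; linarith
      have hpw : (0:ℝ) ≤ N ^ (4 * iX - 1 - 1) := by positivity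
      rw [hpow]
      have hle : (4 * (i:ℝ) + 4 * iY + 1) ≤ ηX / 2 * N := by linarith
      calc (4 * (i:ℝ) + 4 * iY + 1) * N ^ (4 * iX - 1 - 1)
          ≤ (ηX / 2 * N) * N ^ (4 * iX - 1 - 1) := mul_le_mul_of_nonneg_right hle hpw
        _ = ηX / 2 * (N ^ (4 * iX - 1 - 1) * N) := by ring
    have hsplitR := congrArg (fun m : ℕ => (m : ℝ)) hsplit
    push_cast at hsplitR
    simp only [hGoodXdef]
    linarith [hclose, hbadR, hcast, hsplitR]
  set Tuples := GB.sigma (fun t => (GoodY t).sigma (fun Sy => GoodX t Sy)) with hTdef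
  have hTlower : ε / 2 * N ^ (4 * i + 1) * (ηY / 2 * N ^ (4 * iY - 1)) *
      (ηX / 2 * N ^ (4 * iX - 1)) ≤ (Tuples.card : ℝ) := by
    have hcard : Tuples.card = ∑ t ∈ GB, ((GoodY t).sigma (fun Sy => GoodX t Sy)).card := by
      rw [hTdef, card_sigma]
    have hcastT : (Tuples.card : ℝ)
        = ∑ t ∈ GB, (((GoodY t).sigma (fun Sy => GoodX t Sy)).card : ℝ) := by
      rw [hcard]; push_cast; rfl
    rw [hcastT]
    have hinner : ∀ t ∈ GB, (ηY / 2 * N ^ (4 * iY - 1)) * (ηX / 2 * N ^ (4 * iX - 1)) ≤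
        (((GoodY t).sigma (fun Sy => GoodX t Sy)).card : ℝ) := by
      intro t ht
      have h1 : (((GoodY t).sigma (fun Sy => GoodX t Sy)).card : ℝ)
          = ∑ Sy ∈ GoodY t, ((GoodX t Sy).card : ℝ) := by
        rw [card_sigma]; push_cast; rfl
      rw [h1]
      calc (ηY / 2 * N ^ (4 * iY - 1)) * (ηX / 2 * N ^ (4 * iX - 1))
          ≤ ((GoodY t).card : ℝ) * (ηX / 2 * N ^ (4 * iX - 1)) :=
            mul_le_mul_of_nonneg_right (hYb t ht) (by positivity)
        _ ≤ ∑ Sy ∈ GoodY t, ((GoodX t Sy).card : ℝ) := by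
            have := Finset.card_nsmul_le_sum (GoodY t) (fun Sy => ((GoodX t Sy).card : ℝ))
              (ηX / 2 * N ^ (4 * iX - 1)) (fun Sy hSy => hXb t ht Sy hSy)
            rwa [nsmul_eq_mul] at this
    calc ε / 2 * N ^ (4 * i + 1) * (ηY / 2 * N ^ (4 * iY - 1)) * (ηX / 2 * N ^ (4 * iX - 1))
        = (ε / 2 * N ^ (4 * i + 1)) *
          ((ηY / 2 * N ^ (4 * iY - 1)) * (ηX / 2 * N ^ (4 * iX - 1))) := by ring
      _ ≤ (GB.card : ℝ) * ((ηY / 2 * N ^ (4 * iY - 1)) * (ηX / 2 * N ^ (4 * iX - 1))) :=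
          mul_le_mul_of_nonneg_right hGBcard (by positivity)
      _ ≤ ∑ t ∈ GB, (((GoodY t).sigma (fun Sy => GoodX t Sy)).card : ℝ) := by
          have := Finset.card_nsmul_le_sum GB
            (fun t => (((GoodY t).sigma (fun Sy => GoodX t Sy)).card : ℝ))
            ((ηY / 2 * N ^ (4 * iY - 1)) * (ηX / 2 * N ^ (4 * iX - 1))) hinner
          rwa [nsmul_eq_mul] at this
  set g : (Σ _ : Fin n × Fin n × Finset (Fin n), Σ _ : Finset (Fin n), Finset (Fin n)) → Finset (Fin n) :=
    fun p => p.2.2 ∪ insert p.1.1 p.1.2.2 ∪ insert p.1.2.1 p.2.1 with hgdef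
  have hglue : ∀ p ∈ Tuples, IsConnector E k x y (g p) := by
    intro p hp
    rcases p with ⟨⟨x', y', S⟩, Sy, Sx⟩
    rw [hTdef, mem_sigma, mem_sigma] at hp
    obtain ⟨ht, hSy, hSx⟩ := hp
    have htB := hGBsub ht
    have hgood : ((x', y', S).1 ≠ y ∧ (x', y', S).2.1 ≠ x ∧ x ∉ (x', y', S).2.2 ∧
        y ∉ (x', y', S).2.2) := by
      rw [hGBdef, mem_filter] at ht; exact ht.2
    obtain ⟨hx'y, hy'x, hxS, hyS⟩ := hgood
    simp only [hGoodYdef, mem_filter] at hSy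
    obtain ⟨⟨-, hSyConn⟩, hSydisj⟩ := hSy
    simp only [hGoodXdef, mem_filter] at hSx
    obtain ⟨⟨-, hSxConn⟩, hSxdisj⟩ := hSx
    rw [Finset.disjoint_insert_right, Finset.disjoint_insert_right] at hSydisj
    obtain ⟨hxSy, hx'Sy, hSyS⟩ := hSydisj
    rw [Finset.disjoint_insert_right, Finset.disjoint_insert_right,
      Finset.disjoint_union_right] at hSxdisj
    obtain ⟨hySx, hy'Sx, hSxS, hSxSy⟩ := hSxdisj
    simp only [hgdef]
    rcases (hBprop _ htB).2.2 with ⟨hi0, heq, hemp⟩ | ⟨hipos, hSconn⟩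
    · simp only at heq hemp hSyConn hSxConn hxS hyS hx'y hy'x hSyS hSxS ⊢
      subst heq
      subst hemp
      have hgp : Sx ∪ insert x' (∅ : Finset (Fin n)) ∪ insert x' Sy = Sx ∪ insert x' Sy := by
        ext a; simp only [mem_union, mem_insert, Finset.notMem_empty]; tauto
      rw [hgp]
      have hkk : k = iX + iY := by omega
      rw [hkk]
      exact isConnector_glue0 hiX hiY hSxConn hSyConn hxy hSxSy hySx hxSy
    · simp only at hSyConn hSxConn hxS hyS hx'y hy'x hSyS hSxS hSconn ⊢
      rw [hk]
      exact isConnector_glue hiX hiY hipos hSxConn hSconn hSyConn hxy hxS hyS hx'y hy'x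
        hSxS hSxSy hSyS.symm hy'Sx hySx hx'Sy hxSy
  have himgsub : Tuples.image g ⊆ Finset.univ.filter (fun S => IsConnector E k x y S) := by
    intro T hT
    obtain ⟨p, hp, hgp⟩ := mem_image.1 hT
    rw [mem_filter]
    exact ⟨mem_univ _, hgp ▸ hglue p hp⟩
  have hfiber : ∀ T ∈ Tuples.image g, (Tuples.filter (fun p => g p = T)).card ≤ C := by
    intro T hT
    obtain ⟨p0, hp0, hgp0⟩ := mem_image.1 hT
    have hTconn : IsConnector E k x y T := hgp0 ▸ hglue p0 hp0
    have hTcard : T.card = 4 * k - 1 := hTconn.2.2.2.1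
    have hinj : (Tuples.filter (fun p => g p = T)).card ≤
        (T ×ˢ (T ×ˢ (T.powerset ×ˢ (T.powerset ×ˢ T.powerset)))).card := by
      apply card_le_card_of_injOn (fun p => (p.1.1, p.1.2.1, p.1.2.2, p.2.1, p.2.2))
      · intro p hp
        simp only [mem_coe, mem_filter] at hp ⊢
        obtain ⟨-, hgp⟩ := hp
        simp only [hgdef] at hgp
        rw [mem_product]
        refine ⟨?_, ?_⟩
        · rw [← hgp]; exact mem_union_left _ (mem_union_right _ (mem_insert_self _ _))
        rw [mem_product]
        refine ⟨?_, ?_⟩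
        · rw [← hgp]; exact mem_union_right _ (mem_insert_self _ _)
        rw [mem_product]
        refine ⟨?_, ?_⟩
        · rw [mem_powerset]; intro a ha
          rw [← hgp]; exact mem_union_left _ (mem_union_right _ (mem_insert_of_mem ha))
        rw [mem_product]
        refine ⟨?_, ?_⟩
        · rw [mem_powerset]; intro a ha
          rw [← hgp]; exact mem_union_right _ (mem_insert_of_mem ha)
        · rw [mem_powerset]; intro a ha
          rw [← hgp]; exact mem_union_left _ (mem_union_left _ ha)
      · rintro ⟨⟨a1, b1, c1⟩, d1, e1⟩ h1 ⟨⟨a2, b2, c2⟩, d2, e2⟩ h2 h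
        simp only [Prod.mk.injEq] at h
        obtain ⟨ha, hb, hc, hd, he⟩ := h
        subst ha; subst hb; subst hc; subst hd; subst he
        rfl
    have hprod : (T ×ˢ (T ×ˢ (T.powerset ×ˢ (T.powerset ×ˢ T.powerset)))).card ≤ C := by
      simp only [card_product, card_powerset, hTcard]
      rw [hCdef]
      have h1 : 4 * k - 1 ≤ 4 * k := by omega
      have h2 : 2 ^ (4 * k - 1) ≤ 2 ^ (4 * k) := Nat.pow_le_pow_right (by norm_num) (by omega)
      exact Nat.mul_le_mul h1 (Nat.mul_le_mul h1 (Nat.mul_le_mul h2 (Nat.mul_le_mul h2 h2)))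
    exact hinj.trans hprod
  have hcount : Tuples.card ≤ C * (Finset.univ.filter (fun S => IsConnector E k x y S)).card := by
    refine le_trans (Finset.card_le_mul_card_image (f := g) Tuples C hfiber) ?_
    exact Nat.mul_le_mul_left _ (card_le_card himgsub)
  have hcountR : (Tuples.card : ℝ) ≤ (C : ℝ) *
      ((Finset.univ.filter (fun S => IsConnector E k x y S)).card : ℝ) := by
    exact_mod_cast hcount
  have hexp : N ^ (4 * i + 1) * N ^ (4 * iY - 1) * N ^ (4 * iX - 1) = N ^ (4 * k - 1) := by
    rw [← pow_add, ← pow_add]; congr 1; omega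
  have hchain : ε * ηX * ηY / 8 * N ^ (4 * k - 1) ≤ (C : ℝ) *
      ((Finset.univ.filter (fun S => IsConnector E k x y S)).card : ℝ) := by
    calc ε * ηX * ηY / 8 * N ^ (4 * k - 1)
        = ε / 2 * N ^ (4 * i + 1) * (ηY / 2 * N ^ (4 * iY - 1)) *
          (ηX / 2 * N ^ (4 * iX - 1)) := by rw [← hexp]; ring
      _ ≤ (Tuples.card : ℝ) := hTlower
      _ ≤ _ := hcountR
  unfold Close
  rw [Fintype.card_fin, ncard_setOf_eq', ← hNdef]
  rw [div_mul_eq_mul_div, div_le_iff₀ (by positivity : (0:ℝ) < 8 * (C : ℝ))]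
  nlinarith [hchain]
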